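/- arXiv:1110.5692 — 3 statements merged into one kernel-verified Lean document; each statement's English description precedes it below -/
import Mathlib

section
/- Let m ≥ 1 be an integer, ω > 0, and 0 < c₁ ≤ c₂. Then there exists a constant C > 0, depending only on ω, c₁, c₂ and m, such that for every b ∈ ℂ with Re b ≥ c₁ and |b| ≤ c₂, every λ ∈ ℂ with Re λ ≥ ω, and every k ∈ ℤ ∖ {0}, both λ + b·(k+1)^{2m} and λ + b·k^{2m} are nonzero and |k|^{2m+1} · | 1/(λ + b·(k+1)^{2m}) − 1/(λ + b·k^{2m}) | ≤ C. -/
/-!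
Put `n = 2m`, `x = k^n` and `y = (k+1)^n`. Since `x, y ≥ 0`, the real parts give
`‖λ + b x‖ ≥ μ (1 + x)` and `‖λ + b y‖ ≥ μ (1 + y)` with `μ = min ω c₁`, and
`1/(λ + b y) - 1/(λ + b x) = b (x - y) / ((λ + b y)(λ + b x))`. The mean value bound
`|k| |y - x| ≤ n (2|k|)^n`, together with `1 + y ≥ (|k|/2)^n` (the `1` covers `k = -1`) and
`1 + x ≥ |k|^n`, then bounds the weighted difference by `c₂ n 4^n / μ²`.
-/

lemma min_mul_one_add_le_norm_add_mul {ω c : ℝ} {lam b : ℂ} (hlam : ω ≤ lam.re) (hb : c ≤ b.re)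
    {x : ℝ} (hx : 0 ≤ x) : min ω c * (1 + x) ≤ ‖lam + b * x‖ := by
  have hre : (lam + b * x).re = lam.re + b.re * x := by simp
  calc min ω c * (1 + x) = min ω c + min ω c * x := by ring
    _ ≤ lam.re + b.re * x := by
        gcongr
        · exact (min_le_left ω c).trans hlam
        · exact (min_le_right ω c).trans hb
    _ = (lam + b * x).re := hre.symm
    _ ≤ ‖lam + b * x‖ := Complex.re_le_norm _

lemma norm_inv_add_mul_sub_inv_add_mul {lam b : ℂ} {x y : ℝ} (hy : lam + b * y ≠ 0)
    (hx : lam + b * x ≠ 0) :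
    ‖(lam + b * y)⁻¹ - (lam + b * x)⁻¹‖ = ‖b‖ * |x - y| / (‖lam + b * y‖ * ‖lam + b * x‖) := by
  rw [inv_sub_inv hy hx, norm_div, norm_mul, show lam + b * x - (lam + b * y) = b * ↑(x - y) by
    push_cast; ring, norm_mul, Complex.norm_real, Real.norm_eq_abs]

lemma abs_mul_abs_add_one_pow_sub_pow_le {t : ℝ} (ht : 1 ≤ |t|) (n : ℕ) :
    |t| * |(t + 1) ^ n - t ^ n| ≤ n * (2 * |t|) ^ n := by
  obtain _ | n := n
  · simp
  have hmax : max |t + 1| |t| ≤ 2 * |t| := by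
    refine max_le ?_ (by linarith)
    linarith [abs_add_le t 1, abs_one (α := ℝ)]
  calc |t| * |(t + 1) ^ (n + 1) - t ^ (n + 1)|
      ≤ |t| * (|t + 1 - t| * ↑(n + 1) * max |t + 1| |t| ^ n) := by
        gcongr; exact abs_pow_sub_pow_le ..
    _ ≤ 2 * |t| * (↑(n + 1) * (2 * |t|) ^ n) := by
        rw [add_sub_cancel_left, abs_one, one_mul]
        gcongr
        linarith
    _ = ↑(n + 1) * (2 * |t|) ^ (n + 1) := by ring

lemma half_abs_pow_le_one_add_abs_add_one_pow (t : ℝ) (n : ℕ) :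
    (|t| / 2) ^ n ≤ 1 + |t + 1| ^ n := by
  have ht : |t| ≤ |t + 1| + 1 := by simpa using abs_add_le (t + 1) (-1)
  rcases le_total |t + 1| 1 with h | h
  · calc (|t| / 2) ^ n ≤ 1 := pow_le_one₀ (by positivity) (by linarith)
      _ ≤ 1 + |t + 1| ^ n := by simp
  · calc (|t| / 2) ^ n ≤ |t + 1| ^ n := by gcongr; linarith
      _ ≤ 1 + |t + 1| ^ n := by linarith

lemma add_mul_ofReal_ne_zero {ω c : ℝ} (hω : 0 < ω) (hc : 0 < c) {lam b : ℂ} (hlam : ω ≤ lam.re)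
    (hb : c ≤ b.re) {x : ℝ} (hx : 0 ≤ x) : lam + b * x ≠ 0 :=
  norm_pos_iff.mp <| (mul_pos (lt_min hω hc) (by linarith)).trans_le <|
    min_mul_one_add_le_norm_add_mul hlam hb hx

lemma abs_pow_succ_mul_norm_inv_sub_inv_le {ω c₁ c₂ : ℝ} (hω : 0 < ω) (hc₁ : 0 < c₁) {n : ℕ}
    (hn : Even n) {lam b : ℂ} (hlam : ω ≤ lam.re) (hb : c₁ ≤ b.re) (hbc : ‖b‖ ≤ c₂) {t : ℝ}
    (ht : 1 ≤ |t|) :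
    |t| ^ (n + 1) * ‖(lam + b * ((t + 1) ^ n : ℝ))⁻¹ - (lam + b * (t ^ n : ℝ))⁻¹‖ ≤
      c₂ * n * 4 ^ n / min ω c₁ ^ 2 := by
  set μ := min ω c₁
  set A := lam + b * ((t + 1) ^ n : ℝ)
  set B := lam + b * (t ^ n : ℝ)
  have hμ : 0 < μ := lt_min hω hc₁
  have hA : μ * (|t| / 2) ^ n ≤ ‖A‖ := by
    refine (mul_le_mul_of_nonneg_left ?_ hμ.le).trans
      (min_mul_one_add_le_norm_add_mul hlam hb (hn.pow_nonneg _))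
    simpa only [hn.pow_abs] using half_abs_pow_le_one_add_abs_add_one_pow t n
  have hB : μ * |t| ^ n ≤ ‖B‖ := by
    refine (mul_le_mul_of_nonneg_left ?_ hμ.le).trans
      (min_mul_one_add_le_norm_add_mul hlam hb (hn.pow_nonneg _))
    rw [hn.pow_abs]; linarith
  rw [norm_inv_add_mul_sub_inv_add_mul (add_mul_ofReal_ne_zero hω hc₁ hlam hb (hn.pow_nonneg _))
    (add_mul_ofReal_ne_zero hω hc₁ hlam hb (hn.pow_nonneg _)), abs_sub_comm]
  have ht0 : |t| ≠ 0 := by positivity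
  have hc₂ : 0 ≤ c₂ := (norm_nonneg b).trans hbc
  calc |t| ^ (n + 1) * (‖b‖ * |(t + 1) ^ n - t ^ n| / (‖A‖ * ‖B‖))
      = ‖b‖ * (|t| * |(t + 1) ^ n - t ^ n|) * |t| ^ n / (‖A‖ * ‖B‖) := by ring
    _ ≤ c₂ * (n * (2 * |t|) ^ n) * |t| ^ n / ((μ * (|t| / 2) ^ n) * (μ * |t| ^ n)) := by
        gcongr ?_ * ?_ * _ / (?_ * ?_)
        exact abs_mul_abs_add_one_pow_sub_pow_le ht n
    _ = c₂ * n * 4 ^ n / μ ^ 2 := by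
        rw [div_pow, mul_pow, show (4 : ℝ) ^ n = 2 ^ n * 2 ^ n by rw [← mul_pow]; norm_num]
        field_simp

/-- Uniform bound for the first difference of the resolvent symbol:
there is `C = C(ω, c₁, c₂, m) > 0` such that for all `b` with `Re b ≥ c₁`, `|b| ≤ c₂`,
all `λ` with `Re λ ≥ ω` and all nonzero `k ∈ ℤ`, the denominators are nonzero and
`|k|^{2m+1} · |1/(λ + b (k+1)^{2m}) − 1/(λ + b k^{2m})| ≤ C`. -/
theorem symbol_first_difference_bound
    (m : ℕ) (hm : 1 ≤ m) (ω c₁ c₂ : ℝ) (hω : 0 < ω) (hc₁ : 0 < c₁) (hc : c₁ ≤ c₂) :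
    ∃ C > (0 : ℝ), ∀ b : ℂ, c₁ ≤ b.re → ‖b‖ ≤ c₂ →
      ∀ lam : ℂ, ω ≤ lam.re → ∀ k : ℤ, k ≠ 0 →
        lam + b * ((k : ℂ) + 1) ^ (2 * m) ≠ 0 ∧
        lam + b * (k : ℂ) ^ (2 * m) ≠ 0 ∧
        |(k : ℝ)| ^ (2 * m + 1) *
          ‖(lam + b * ((k : ℂ) + 1) ^ (2 * m))⁻¹ -
            (lam + b * (k : ℂ) ^ (2 * m))⁻¹‖ ≤ C := by
  have hn : Even (2 * m) := even_two_mul m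
  have hc₂ : 0 < c₂ := hc₁.trans_le hc
  have hμ : 0 < min ω c₁ := lt_min hω hc₁
  have h2m : (0 : ℝ) < ↑(2 * m) := by exact_mod_cast (by omega : 0 < 2 * m)
  refine ⟨c₂ * ↑(2 * m) * 4 ^ (2 * m) / min ω c₁ ^ 2, by positivity,
    fun b hb hbc lam hlam k hk => ?_⟩
  have hy : ((k : ℂ) + 1) ^ (2 * m) = (((k : ℝ) + 1) ^ (2 * m) : ℝ) := by push_cast; rfl
  have hx : (k : ℂ) ^ (2 * m) = ((k : ℝ) ^ (2 * m) : ℝ) := by push_cast; rfl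
  rw [hy, hx]
  refine ⟨add_mul_ofReal_ne_zero hω hc₁ hlam hb (hn.pow_nonneg _),
    add_mul_ofReal_ne_zero hω hc₁ hlam hb (hn.pow_nonneg _), ?_⟩
  exact abs_pow_succ_mul_norm_inv_sub_inv_le hω hc₁ hn hlam hb hbc
    (by rw [← Int.cast_abs]; exact_mod_cast Int.one_le_abs hk)
end

section
/- Let α ∈ (0,1), ε ∈ (0,1/2), z ∈ ℝ. Let X : ℝ → ℝ be continuously differentiable with X(x) = 0 for |x| ≥ 1. Let b : ℝ → ℂ be 2π-periodic with [b]_{α,per} < ∞, and define the 2π-periodic function b_{z,ε}(x) := Σ_{k∈ℤ} X(x − z − 2πk)·( b(z + r_ε(x − z − 2πk)) − b(z) ) (for each x at most one summand is nonzero). Set [b]_{α,z,ε} := sup{ |b(x) − b(y)|/d_per(x,y)^α : d_per(x,z) ≤ ε, d_per(y,z) ≤ ε, d_per(x,y) > 0 }. Then: sup_ℝ |b_{z,ε}| ≤ ε^α · (sup|X|) · [b]_{α,z,ε}, and [b_{z,ε}]_{α,per} ≤ ( sup|X| + ε^α · π^{1−α} · sup|X′| ) · [b]_{α,z,ε}; consequently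 sup|b_{z,ε}| + [b_{z,ε}]_{α,per} ≤ ( (1 + ε^α)·sup|X| + ε^α · π^{1−α} · sup|X′| ) · [b]_{α,z,ε}. -/
/-!
Put `F(t) = X(t) (b(z + r_ε t) - b(z))`, so that `b_{z,ε}` is the `2π`-periodization
`x ↦ Σ_k F(x - z - 2πk)` of `F`. Since `F` vanishes outside `(-1, 1)` and `2 + π < 2π`, for every
shift `|w| ≤ π` at most one term of the periodizations of `F` and of `F(· + w) - F` is nonzero;
choosing `w` with `x - y ≡ w (mod 2π)` and `|w| = d_per(x, y)`, sup and Hölder bounds on `F` pass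
to `b_{z,ε}`. For `F` itself, split `F(t + w) - F(t)` as
`X(t + w) (b(z + r_ε(t + w)) - b(z + r_ε t)) + (X(t + w) - X(t)) (b(z + r_ε t) - b(z))`:
`r_ε` is `1`-Lipschitz with values in `[-ε, ε]`, and `|w| ≤ π^(1-α) |w|^α` for `|w| ≤ π`.
-/

open Real

/-- The canonical distance on `ℝ / 2πℤ`: `d_per(x,y) = inf_{k ∈ ℤ} |x - y + 2πk|`. -/
noncomputable def dper (x y : ℝ) : ℝ := ⨅ k : ℤ, |x - y + 2 * π * k|

/-- A function `f : ℝ → ℂ` is `2π`-periodic. -/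
def Per (f : ℝ → ℂ) : Prop := ∀ x, f (x + 2 * π) = f x

/-- The truncation `r_ε`: `r_ε(x) = x` if `|x| ≤ ε`, `ε` if `x > ε`, `−ε` if `x < −ε`. -/
noncomputable def rtr (ε x : ℝ) : ℝ := if |x| ≤ ε then x else if ε < x then ε else -ε

/-- The localized coefficient
`b_{z,ε}(x) = Σ_{k ∈ ℤ} X(x − z − 2πk) · (b(z + r_ε(x − z − 2πk)) − b(z))`. -/
noncomputable def bze (X : ℝ → ℝ) (b : ℝ → ℂ) (z ε x : ℝ) : ℂ :=
  ∑' k : ℤ, (X (x - z - 2 * π * k) : ℂ) * (b (z + rtr ε (x - z - 2 * π * k)) - b z)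

/-- Set of periodic Hölder quotients of `g` with exponent `α`. -/
def perHolderSet (α : ℝ) (g : ℝ → ℂ) : Set ℝ :=
  {r | ∃ x y : ℝ, 0 < dper x y ∧ r = ‖g x - g y‖ / dper x y ^ α}

/-- The periodic Hölder seminorm `[g]_{α,per}`. -/
noncomputable def perSemi (α : ℝ) (g : ℝ → ℂ) : ℝ := sSup (perHolderSet α g)

/-- The localized Hölder seminorm `[b]_{α,z,ε}` over the ball of radius `ε` around `z`. -/
noncomputable def locSemi (α : ℝ) (b : ℝ → ℂ) (z ε : ℝ) : ℝ :=
  sSup {r | ∃ x y : ℝ, dper x z ≤ ε ∧ dper y z ≤ ε ∧ 0 < dper x y ∧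
      r = ‖b x - b y‖ / dper x y ^ α}

open Function

theorem coe_add_two_pi_mul_intCast (t : ℝ) (k : ℤ) :
    ((t + 2 * π * k : ℝ) : AddCircle (2 * π)) = t := by
  rw [AddCircle.coe_add, mul_comm (2 * π), ← zsmul_eq_mul, AddCircle.coe_zsmul,
    AddCircle.coe_period, smul_zero, add_zero]

theorem dper_eq_norm_coe (x y : ℝ) : dper x y = ‖((x - y : ℝ) : AddCircle (2 * π))‖ := by
  apply le_antisymm
  · have hbdd : BddBelow (Set.range fun k : ℤ => |x - y + 2 * π * k|) :=
      ⟨0, by rintro _ ⟨k, rfl⟩; positivity⟩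
    refine (ciInf_le hbdd (-round ((2 * π)⁻¹ * (x - y)))).trans_eq ?_
    rw [AddCircle.norm_eq]
    push_cast
    ring_nf
  · refine le_ciInf fun k => ?_
    rw [← coe_add_two_pi_mul_intCast (x - y) k]
    exact QuotientAddGroup.norm_mk_le_norm

theorem dper_sub_right (x y z : ℝ) : dper (x - z) (y - z) = dper x y := by
  simp only [dper, sub_sub_sub_cancel_right]

theorem dper_nonneg (x y : ℝ) : 0 ≤ dper x y := by
  rw [dper_eq_norm_coe]
  exact norm_nonneg _

theorem dper_le_abs_sub (x y : ℝ) : dper x y ≤ |x - y| := by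
  rw [dper_eq_norm_coe]
  exact QuotientAddGroup.norm_mk_le_norm

theorem exists_dper_eq_abs (x y : ℝ) :
    ∃ (w : ℝ) (m : ℤ), |w| ≤ π ∧ x = y + w + m * (2 * π) ∧ dper x y = |w| := by
  set m := round ((2 * π)⁻¹ * (x - y))
  have hnorm := AddCircle.norm_eq (2 * π) (x := x - y)
  refine ⟨x - y - m * (2 * π), m, ?_, by ring, by rw [dper_eq_norm_coe, hnorm]⟩
  rw [← hnorm]
  have := AddCircle.norm_le_half_period (2 * π) (x := ((x - y : ℝ) : AddCircle (2 * π)))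
    (by positivity)
  rwa [abs_of_pos (by positivity), mul_div_cancel_left₀ _ two_ne_zero] at this

theorem rtr_eq_max_min {ε : ℝ} (hε : 0 ≤ ε) (x : ℝ) : rtr ε x = max (min x ε) (-ε) := by
  unfold rtr
  split_ifs with h₁ h₂
  · rw [min_eq_left (abs_le.1 h₁).2, max_eq_left (abs_le.1 h₁).1]
  · rw [min_eq_right h₂.le, max_eq_left (by linarith)]
  · have hx : x < -ε := by
      rw [not_le, lt_abs] at h₁
      rcases h₁ with h₁ | h₁ <;> linarith
    rw [min_eq_left (by linarith), max_eq_right hx.le]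

theorem abs_rtr_le {ε : ℝ} (hε : 0 ≤ ε) (x : ℝ) : |rtr ε x| ≤ ε := by
  rw [rtr_eq_max_min hε, abs_le]
  exact ⟨le_max_right _ _, max_le (min_le_right _ _) (by linarith)⟩

theorem abs_rtr_sub_rtr_le {ε : ℝ} (hε : 0 ≤ ε) (x y : ℝ) : |rtr ε x - rtr ε y| ≤ |x - y| := by
  rw [rtr_eq_max_min hε, rtr_eq_max_min hε]
  calc _ ≤ |min x ε - min y ε| := abs_max_sub_max_le_abs _ _ _
    _ ≤ max |x - y| |ε - ε| := abs_min_sub_min_le_max _ _ _ _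
    _ = |x - y| := by simp

section Periodize

variable {E : Type*} [NormedAddCommGroup E]

noncomputable def periodize (f : ℝ → E) (u : ℝ) : E := ∑' k : ℤ, f (u - 2 * π * k)

theorem periodize_periodic (f : ℝ → E) : Periodic (periodize f) (2 * π) := fun u => by
  unfold periodize
  rw [← (Equiv.addRight (1 : ℤ)).tsum_eq]
  congr 1 with k
  simp only [Equiv.coe_addRight, Int.cast_add, Int.cast_one]
  ring_nf

theorem subsingleton_support_periodize
    {f : ℝ → E} (hf : ∀ s t, f s ≠ 0 → f t ≠ 0 → |s - t| < 2 * π) (u : ℝ) :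
    (support fun k : ℤ => f (u - 2 * π * k)).Subsingleton := by
  intro k hk l hl
  have h := hf _ _ hk hl
  rw [show u - 2 * π * k - (u - 2 * π * l) = 2 * π * (l - k) by ring, abs_mul,
    abs_of_pos (by positivity), mul_lt_iff_lt_one_right (by positivity)] at h
  have : |l - k| < 1 := by exact_mod_cast h
  exact (sub_eq_zero.1 (Int.abs_lt_one_iff.1 this)).symm

theorem norm_periodize_le {f : ℝ → E} (hf : ∀ s t, f s ≠ 0 → f t ≠ 0 → |s - t| < 2 * π)
    {M : ℝ} (hM : ∀ t, ‖f t‖ ≤ M) (u : ℝ) : ‖periodize f u‖ ≤ M := by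
  rcases (subsingleton_support_periodize hf u).eq_empty_or_singleton with h | ⟨k, h⟩
  · rw [periodize, support_eq_empty_iff.1 h, Pi.zero_def, tsum_zero, norm_zero]
    exact (norm_nonneg _).trans (hM 0)
  · have hk : ∀ l ≠ k, f (u - 2 * π * l) = 0 := fun l hl => by
      by_contra hne
      have hl' : l ∈ support fun k : ℤ => f (u - 2 * π * k) := hne
      exact hl (by rwa [h] at hl')
    rw [periodize, tsum_eq_single k hk]
    exact hM _

theorem periodize_add_sub {f : ℝ → E} (hf : ∀ s t, f s ≠ 0 → f t ≠ 0 → |s - t| < 2 * π)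
    (u w : ℝ) : periodize f (u + w) - periodize f u = periodize (fun t => f (t + w) - f t) u := by
  have hsum : ∀ v, Summable fun k : ℤ => f (v - 2 * π * k) := fun v =>
    summable_of_hasFiniteSupport (subsingleton_support_periodize hf v).finite
  unfold periodize
  rw [← (hsum _).tsum_sub (hsum u)]
  congr 1 with k
  ring_nf

theorem abs_sub_lt_two_pi_of_forall_one_le_abs {f : ℝ → E} (hf : ∀ t, 1 ≤ |t| → f t = 0) :
    ∀ s t, f s ≠ 0 → f t ≠ 0 → |s - t| < 2 * π := fun s t hs ht => by
  have hs' := not_le.1 (mt (hf s) hs)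
  have ht' := not_le.1 (mt (hf t) ht)
  calc |s - t| ≤ |s| + |t| := abs_sub _ _
    _ < 2 * π := by linarith [pi_gt_three]

theorem norm_periodize_sub_le {f : ℝ → E} (hf : ∀ t, 1 ≤ |t| → f t = 0) {K α : ℝ}
    (hK : ∀ t w, |w| ≤ π → ‖f (t + w) - f t‖ ≤ K * |w| ^ α) (x y : ℝ) :
    ‖periodize f x - periodize f y‖ ≤ K * dper x y ^ α := by
  obtain ⟨w, m, hw, rfl, hd⟩ := exists_dper_eq_abs x y
  rw [hd, (periodize_periodic f).int_mul m,
    periodize_add_sub (abs_sub_lt_two_pi_of_forall_one_le_abs hf)]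
  have hsupp : ∀ s, f (s + w) - f s ≠ 0 → |s| < 1 ∨ |s + w| < 1 := fun s hs => by
    by_contra! h
    exact hs (by rw [hf s h.1, hf _ h.2, sub_zero])
  refine norm_periodize_le (fun s t hs ht => ?_) (fun t => hK t w hw) y
  -- `|s - t| < 2 + |w| ≤ 2 + π < 2π`
  rw [abs_le] at hw
  rcases hsupp s hs with hs | hs <;> rcases hsupp t ht with ht | ht <;>
    rw [abs_lt] at hs ht ⊢ <;> constructor <;> linarith [hs.1, hs.2, ht.1, ht.2, pi_gt_three]

end Periodize

theorem le_rpow_one_sub_mul_rpow {a c α : ℝ} (hα : α ≤ 1) (ha : 0 ≤ a) (hac : a ≤ c) :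
    a ≤ c ^ (1 - α) * a ^ α := by
  rcases ha.eq_or_lt with rfl | ha
  · exact mul_nonneg (rpow_nonneg hac _) (rpow_nonneg le_rfl _)
  · calc a = a ^ (1 - α) * a ^ α := by rw [← rpow_add ha, sub_add_cancel, rpow_one]
      _ ≤ c ^ (1 - α) * a ^ α := by gcongr

def HolderOnBall (α L : ℝ) (b : ℝ → ℂ) (z ε : ℝ) : Prop :=
  ∀ u v, dper u z ≤ ε → dper v z ≤ ε → ‖b u - b v‖ ≤ L * dper u v ^ α

theorem locSemi_nonneg (α : ℝ) (b : ℝ → ℂ) (z ε : ℝ) : 0 ≤ locSemi α b z ε :=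
  Real.sSup_nonneg <| by
    rintro _ ⟨x, y, -, -, -, rfl⟩
    exact div_nonneg (norm_nonneg _) (rpow_nonneg (dper_nonneg x y) α)

theorem holderOnBall_locSemi {α ε z : ℝ} {b : ℝ → ℂ} (hb : Per b)
    (hbdd : BddAbove (perHolderSet α b)) : HolderOnBall α (locSemi α b z ε) b z ε := by
  intro u v hu hv
  rcases (dper_nonneg u v).eq_or_lt with hd | hd
  · obtain ⟨w, m, -, rfl, hw⟩ := exists_dper_eq_abs u v
    rw [← hd, eq_comm, abs_eq_zero] at hw
    rw [hw, add_zero, (Periodic.int_mul hb m) v, sub_self, norm_zero]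
    exact mul_nonneg (locSemi_nonneg _ _ _ _) (rpow_nonneg (dper_nonneg _ _) α)
  · rw [← div_le_iff₀ (rpow_pos_of_pos hd α)]
    refine le_csSup (hbdd.mono ?_) ⟨u, v, hu, hv, hd, rfl⟩
    rintro _ ⟨x, y, -, -, hxy, rfl⟩
    exact ⟨x, y, hxy, rfl⟩

theorem abs_le_iSup_abs {f : ℝ → ℝ} (hf : Continuous f) (hfs : HasCompactSupport f) (t : ℝ) :
    |f t| ≤ ⨆ x, |f x| :=
  le_ciSup (hf.abs.bddAbove_range_of_hasCompactSupport hfs.abs) t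

theorem abs_sub_le_iSup_abs_deriv_mul {f : ℝ → ℝ} (hf : ContDiff ℝ 1 f)
    (hfs : HasCompactSupport f) (s t : ℝ) : |f s - f t| ≤ (⨆ x, |deriv f x|) * |s - t| :=
  Convex.norm_image_sub_le_of_norm_deriv_le
    (fun _ _ => (hf.differentiable one_ne_zero).differentiableAt)
    (fun _ _ => abs_le_iSup_abs (hf.continuous_deriv le_rfl) hfs.deriv _)
    convex_univ trivial trivial

theorem hasCompactSupport_of_forall_one_le_abs {f : ℝ → ℝ} (hf : ∀ x, 1 ≤ |x| → f x = 0) :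
    HasCompactSupport f :=
  .intro' (isCompact_closedBall 0 1) Metric.isClosed_closedBall fun x hx => hf x <| by
    rw [Metric.mem_closedBall, dist_zero_right, not_le] at hx
    exact hx.le

noncomputable def localizedProfile (X : ℝ → ℝ) (b : ℝ → ℂ) (z ε t : ℝ) : ℂ :=
  (X t : ℂ) * (b (z + rtr ε t) - b z)

theorem bze_eq_periodize (X : ℝ → ℝ) (b : ℝ → ℂ) (z ε x : ℝ) :
    bze X b z ε x = periodize (localizedProfile X b z ε) (x - z) := rfl

section LocalizedProfile

variable {X : ℝ → ℝ} {b : ℝ → ℂ} {α ε z MX MX' L : ℝ}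

theorem localizedProfile_eq_zero (hX : ∀ x, 1 ≤ |x| → X x = 0) {t : ℝ} (ht : 1 ≤ |t|) :
    localizedProfile X b z ε t = 0 := by
  rw [localizedProfile, hX t ht, Complex.ofReal_zero, zero_mul]

theorem dper_add_rtr_le (hε : 0 ≤ ε) (t : ℝ) : dper (z + rtr ε t) z ≤ ε :=
  (dper_le_abs_sub _ _).trans <| by rw [add_sub_cancel_left]; exact abs_rtr_le hε t

theorem norm_sub_le_of_holderOnBall (hα : 0 ≤ α) (hε : 0 ≤ ε) (hL : 0 ≤ L)
    (hb : HolderOnBall α L b z ε) (t : ℝ) : ‖b (z + rtr ε t) - b z‖ ≤ L * ε ^ α := by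
  have hz : dper z z ≤ ε := (dper_le_abs_sub z z).trans (by simpa)
  refine (hb _ _ (dper_add_rtr_le hε t) hz).trans ?_
  gcongr
  exacts [dper_nonneg _ _, dper_add_rtr_le hε t]

theorem norm_localizedProfile_le (hα : 0 ≤ α) (hε : 0 ≤ ε) (hL : 0 ≤ L)
    (hXb : ∀ t, |X t| ≤ MX) (hb : HolderOnBall α L b z ε) (t : ℝ) :
    ‖localizedProfile X b z ε t‖ ≤ ε ^ α * MX * L := by
  rw [localizedProfile, norm_mul, Complex.norm_real, Real.norm_eq_abs]
  calc |X t| * ‖b (z + rtr ε t) - b z‖ ≤ MX * (L * ε ^ α) :=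
        mul_le_mul (hXb t) (norm_sub_le_of_holderOnBall hα hε hL hb t) (norm_nonneg _)
          ((abs_nonneg _).trans (hXb t))
    _ = ε ^ α * MX * L := by ring

theorem norm_localizedProfile_add_sub_le (hα : α ∈ Set.Icc (0 : ℝ) 1) (hε : 0 ≤ ε) (hL : 0 ≤ L)
    (hXb : ∀ t, |X t| ≤ MX) (hXlip : ∀ s t, |X s - X t| ≤ MX' * |s - t|)
    (hb : HolderOnBall α L b z ε) (t w : ℝ) (hw : |w| ≤ π) :
    ‖localizedProfile X b z ε (t + w) - localizedProfile X b z ε t‖ ≤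
      (MX + ε ^ α * π ^ (1 - α) * MX') * L * |w| ^ α := by
  have hbw : ‖b (z + rtr ε (t + w)) - b (z + rtr ε t)‖ ≤ L * |w| ^ α := by
    have hd : dper (z + rtr ε (t + w)) (z + rtr ε t) ≤ |w| := by
      refine (dper_le_abs_sub _ _).trans ?_
      rw [add_sub_add_left_eq_sub]
      simpa using abs_rtr_sub_rtr_le hε (t + w) t
    refine (hb _ _ (dper_add_rtr_le hε _) (dper_add_rtr_le hε _)).trans ?_
    exact mul_le_mul_of_nonneg_left (rpow_le_rpow (dper_nonneg _ _) hd hα.1) hL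
  have hXw : |X (t + w) - X t| ≤ MX' * (π ^ (1 - α) * |w| ^ α) := by
    have hMX' : 0 ≤ MX' := by simpa using (abs_nonneg _).trans (hXlip 1 0)
    calc |X (t + w) - X t| ≤ MX' * |w| := by simpa using hXlip (t + w) t
      _ ≤ MX' * (π ^ (1 - α) * |w| ^ α) := by
        gcongr
        exact le_rpow_one_sub_mul_rpow hα.2 (abs_nonneg w) hw
  calc ‖localizedProfile X b z ε (t + w) - localizedProfile X b z ε t‖
      = ‖(X (t + w) : ℂ) * (b (z + rtr ε (t + w)) - b (z + rtr ε t)) +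
          ((X (t + w) - X t : ℝ) : ℂ) * (b (z + rtr ε t) - b z)‖ := by
        simp only [localizedProfile]
        push_cast
        ring_nf
    _ ≤ |X (t + w)| * ‖b (z + rtr ε (t + w)) - b (z + rtr ε t)‖ +
          |X (t + w) - X t| * ‖b (z + rtr ε t) - b z‖ := by
        refine (norm_add_le _ _).trans_eq ?_
        simp only [norm_mul, Complex.norm_real, Real.norm_eq_abs]
    _ ≤ MX * (L * |w| ^ α) + MX' * (π ^ (1 - α) * |w| ^ α) * (L * ε ^ α) := by
        gcongr
        · exact (abs_nonneg _).trans (hXb 0)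
        · exact hXb _
        · exact (abs_nonneg _).trans hXw
        · exact norm_sub_le_of_holderOnBall hα.1 hε hL hb t
    _ = (MX + ε ^ α * π ^ (1 - α) * MX') * L * |w| ^ α := by ring

end LocalizedProfile

/-- Estimates for the localized coefficient `b_{z,ε}`: its sup-norm and periodic Hölder
seminorm are controlled by the local Hölder seminorm `[b]_{α,z,ε}`. -/
theorem localized_coefficient_bounds
    (α ε z : ℝ) (hα : α ∈ Set.Ioo (0 : ℝ) 1) (hε : ε ∈ Set.Ioo (0 : ℝ) (1 / 2))
    (X : ℝ → ℝ) (hX : ContDiff ℝ 1 X) (hXsupp : ∀ x : ℝ, 1 ≤ |x| → X x = 0)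
    (b : ℝ → ℂ) (hb : Per b) (hbfin : BddAbove (perHolderSet α b)) :
    BddAbove (perHolderSet α (bze X b z ε)) ∧
    (⨆ x : ℝ, ‖bze X b z ε x‖) ≤
        ε ^ α * (⨆ x : ℝ, |X x|) * locSemi α b z ε ∧
    perSemi α (bze X b z ε) ≤
        ((⨆ x : ℝ, |X x|) + ε ^ α * π ^ (1 - α) * (⨆ x : ℝ, |deriv X x|)) * locSemi α b z ε ∧
    (⨆ x : ℝ, ‖bze X b z ε x‖) + perSemi α (bze X b z ε) ≤
        ((1 + ε ^ α) * (⨆ x : ℝ, |X x|) + ε ^ α * π ^ (1 - α) * (⨆ x : ℝ, |deriv X x|)) *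
          locSemi α b z ε := by
  have hα' : α ∈ Set.Icc (0 : ℝ) 1 := Set.Ioo_subset_Icc_self hα
  have hε0 : 0 ≤ ε := hε.1.le
  have hXs := hasCompactSupport_of_forall_one_le_abs hXsupp
  have hXb := abs_le_iSup_abs hX.continuous hXs
  have hXlip := abs_sub_le_iSup_abs_deriv_mul hX hXs
  have hL := locSemi_nonneg α b z ε
  have hbL : HolderOnBall α (locSemi α b z ε) b z ε := holderOnBall_locSemi hb hbfin
  have hsup : (⨆ x, ‖bze X b z ε x‖) ≤ ε ^ α * (⨆ x, |X x|) * locSemi α b z ε :=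
    ciSup_le fun x => norm_periodize_le
      (abs_sub_lt_two_pi_of_forall_one_le_abs fun _ => localizedProfile_eq_zero hXsupp)
      (norm_localizedProfile_le hα'.1 hε0 hL hXb hbL) _
  have hquot : ∀ r ∈ perHolderSet α (bze X b z ε),
      r ≤ ((⨆ x, |X x|) + ε ^ α * π ^ (1 - α) * (⨆ x, |deriv X x|)) * locSemi α b z ε := by
    rintro _ ⟨x, y, hxy, rfl⟩
    rw [div_le_iff₀ (rpow_pos_of_pos hxy α), bze_eq_periodize, bze_eq_periodize]
    refine (norm_periodize_sub_le (fun _ => localizedProfile_eq_zero hXsupp)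
      (norm_localizedProfile_add_sub_le hα' hε0 hL hXb hXlip hbL) _ _).trans_eq ?_
    rw [dper_sub_right]
  have hsemi : perSemi α (bze X b z ε) ≤
      ((⨆ x, |X x|) + ε ^ α * π ^ (1 - α) * (⨆ x, |deriv X x|)) * locSemi α b z ε :=
    Real.sSup_le hquot <| by
      have := Real.iSup_nonneg fun x => abs_nonneg (X x)
      have := Real.iSup_nonneg fun x => abs_nonneg (deriv X x)
      positivity
  exact ⟨⟨_, hquot⟩, hsup, hsemi, by linarith⟩
end

section
/- Let E be a complex Banach space, m ≥ 1 an integer, ω > 0, and c₂ ≥ c₁ ≥ 1. Let b : E → E be a bounded linear operator with ‖b‖ ≤ c₂ such that for every μ ∈ ℂ with Re μ ≥ 0 the operator μ·id + b is invertible with (1 + |μ|)·‖(μ·id + b)^{−1}‖ ≤ c₁. Then there exists C > 0, depending only on ω, m, c₁, c₂, such that for every λ ∈ ℂ with Re λ ≥ ω and every k ∈ ℤ ∖ {0}: |k|^{2m+2} · ‖ M_{k+1} − 2·M_k + M_{k−1} ‖ ≤ C, where M_j := (λ·id + j^{2m}·b)^{−1} for j ∈ ℤ (so in particular M_0 = λ^{−1}·id).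 -/
/-!
With `a_j = j^{2m}`, the resolvent identity `M_i - M_j = (a_j - a_i) M_i b M_j`, applied twice,
writes the second difference as `(2a_k - a_{k+1} - a_{k-1}) M_{k+1} b M_k` plus two terms that are
quadratic in first differences of `a`. Rescaling the hypothesis on `b` gives
`(|j|^{2m} + |λ|) ‖M_j‖ ≤ c₁`, hence `‖M_j‖ ≲ |k|^{-2m}` for `|j - k| ≤ 1`, while the binomial
expansion bounds the first and second differences of `a` near `k` by `|k|^{2m-1}` and `|k|^{2m-2}`.
The powers of `|k|` then cancel exactly against `|k|^{2m+2}`.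
-/

open Finset

theorem add_pow_add_two_eq_sum_range_add {R : Type*} [CommRing R] (x y : R) (n : ℕ) :
    (x + y) ^ (n + 2) =
      ∑ i ∈ range (n + 1), x ^ i * y ^ (n + 2 - i) * ((n + 2).choose i : R)
        + (n + 2) * x ^ (n + 1) * y + x ^ (n + 2) := by
  rw [add_pow, sum_range_succ, sum_range_succ]
  simp only [show n + 2 - (n + 1) = 1 by omega, pow_one, Nat.choose_succ_self_right, Nat.cast_add,
    Nat.cast_one, tsub_self, pow_zero, mul_one, Nat.choose_self]
  ring

section BinomialDifferences

variable {R : Type*} [NormedCommRing R] [NormOneClass R] {x y : R}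

theorem norm_sum_range_pow_mul_pow_choose_le (hx : 1 ≤ ‖x‖) (hy : ‖y‖ ≤ 1) {n N : ℕ}
    (hnN : n ≤ N) :
    ‖∑ i ∈ range (n + 1), x ^ i * y ^ (N - i) * (N.choose i : R)‖ ≤ 2 ^ N * ‖x‖ ^ n := by
  have hchoose : ∑ i ∈ range (n + 1), N.choose i ≤ 2 ^ N :=
    Nat.sum_range_choose N ▸ sum_le_sum_of_subset (range_subset_range.mpr (by omega))
  calc _ ≤ ∑ i ∈ range (n + 1), ‖x‖ ^ n * (N.choose i : ℝ) := by
        refine (norm_sum_le _ _).trans (sum_le_sum fun i hi => ?_)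
        have hxi : ‖x‖ ^ i ≤ ‖x‖ ^ n := pow_le_pow_right₀ hx (Nat.lt_succ_iff.mp (mem_range.mp hi))
        have hyi : ‖y‖ ^ (N - i) ≤ 1 := pow_le_one₀ (norm_nonneg y) hy
        calc ‖x ^ i * y ^ (N - i) * (N.choose i : R)‖
            ≤ ‖x‖ ^ i * ‖y‖ ^ (N - i) * N.choose i := by
              refine norm_mul₃_le.trans ?_
              gcongr
              · exact norm_pow_le x i
              · exact norm_pow_le y (N - i)
              · simpa using Nat.norm_cast_le (α := R) (N.choose i)
          _ ≤ ‖x‖ ^ n * 1 * N.choose i := by gcongr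
          _ = ‖x‖ ^ n * N.choose i := by rw [mul_one]
    _ = ‖x‖ ^ n * ∑ i ∈ range (n + 1), (N.choose i : ℝ) := (mul_sum ..).symm
    _ ≤ 2 ^ N * ‖x‖ ^ n := by rw [mul_comm]; gcongr; exact_mod_cast hchoose

theorem norm_add_pow_sub_pow_le (hx : 1 ≤ ‖x‖) (hy : ‖y‖ ≤ 1) (n : ℕ) :
    ‖(x + y) ^ (n + 1) - x ^ (n + 1)‖ ≤ 2 ^ (n + 1) * ‖x‖ ^ n := by
  have h := add_pow x y (n + 1)
  rw [sum_range_succ, Nat.sub_self, pow_zero, Nat.choose_self, Nat.cast_one, mul_one,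
    mul_one] at h
  rw [h, add_sub_cancel_right]
  exact norm_sum_range_pow_mul_pow_choose_le hx hy n.le_succ

theorem norm_add_one_pow_sub_two_mul_pow_add_sub_one_pow_le (hx : 1 ≤ ‖x‖) (n : ℕ) :
    ‖(x + 1) ^ (n + 2) - 2 * x ^ (n + 2) + (x - 1) ^ (n + 2)‖ ≤ 2 ^ (n + 3) * ‖x‖ ^ n := by
  have hplus := norm_sum_range_pow_mul_pow_choose_le hx norm_one.le (n.le_add_right 2)
  have hminus := norm_sum_range_pow_mul_pow_choose_le hx (norm_neg (1 : R) ▸ norm_one.le)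
    (n.le_add_right 2)
  rw [sub_eq_add_neg x, add_pow_add_two_eq_sum_range_add, add_pow_add_two_eq_sum_range_add]
  refine (le_of_eq ?_).trans (((norm_add_le _ _).trans (add_le_add hplus hminus)).trans_eq ?_)
  · congr 1; ring
  · ring

end BinomialDifferences

section Resolvent

variable {𝕜 A : Type*} [CommRing 𝕜] [Ring A] [Algebra 𝕜 A]

theorem sub_eq_smul_mul_mul_of_mul_eq_one {lam s t : 𝕜} {b x y : A}
    (hx : x * (lam • 1 + s • b) = 1) (hy : (lam • 1 + t • b) * y = 1) :
    x - y = (t - s) • (x * b * y) := by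
  calc x - y = x * ((lam • 1 + t • b) - (lam • 1 + s • b)) * y := by
        rw [mul_sub, sub_mul, mul_assoc, hy, mul_one, hx, one_mul]
    _ = (t - s) • (x * b * y) := by
        rw [add_sub_add_left_eq_sub, ← sub_smul, mul_smul_comm, smul_mul_assoc]

theorem second_difference_eq_of_resolvent {s t u : 𝕜} {b x y z : A}
    (hxy : x - y = (t - s) • (x * b * y)) (hyz : y - z = (u - t) • (y * b * z)) :
    x - 2 • y + z = (2 * t - s - u) • (x * b * y)
      + ((t - u) * (s - t)) • (x * b * y * b * y) + (t - u) ^ 2 • (y * b * y * b * z) := by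
  have hcross : x * b * y - y * b * z
      = (t - s) • (x * b * y * b * y) + (u - t) • (y * b * y * b * z) := by
    calc x * b * y - y * b * z = (x - y) * b * y + y * b * (y - z) := by noncomm_ring
      _ = _ := by
        rw [hxy, hyz, smul_mul_assoc, smul_mul_assoc, mul_smul_comm]
        simp only [mul_assoc]
  calc x - 2 • y + z = (x - y) - (y - z) := by rw [two_smul]; abel
    _ = _ := by
      rw [hxy, hyz]
      linear_combination (norm := module) (u - t) • hcross

end Resolvent

theorem norm_second_difference_le_of_resolvent {𝕜 A : Type*} [NormedField 𝕜] [NormedRing A]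
    [NormedAlgebra 𝕜 A] {s t u : 𝕜} {b x y z : A}
    (hxy : x - y = (t - s) • (x * b * y)) (hyz : y - z = (u - t) • (y * b * z))
    {β c d e : ℝ} (hb : ‖b‖ ≤ β) (hx : ‖x‖ ≤ c) (hy : ‖y‖ ≤ c) (hz : ‖z‖ ≤ c)
    (hst : ‖s - t‖ ≤ e) (htu : ‖t - u‖ ≤ e) (hstu : ‖s - 2 * t + u‖ ≤ d) :
    ‖x - 2 • y + z‖ ≤ d * β * c ^ 2 + 2 * e ^ 2 * β ^ 2 * c ^ 3 := by
  have hβ : 0 ≤ β := (norm_nonneg b).trans hb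
  have hc : 0 ≤ c := (norm_nonneg x).trans hx
  have he : 0 ≤ e := (norm_nonneg _).trans hst
  have hd : 0 ≤ d := (norm_nonneg _).trans hstu
  have hmul₃ : ∀ {p q : A}, ‖p‖ ≤ c → ‖q‖ ≤ c → ‖p * b * q‖ ≤ c * β * c := fun hp hq =>
    norm_mul_le_of_le (norm_mul_le_of_le hp hb) hq
  have hmul₅ : ∀ {p q r : A}, ‖p‖ ≤ c → ‖q‖ ≤ c → ‖r‖ ≤ c →
      ‖p * b * q * b * r‖ ≤ c * β * c * β * c := fun hp hq hr =>
    norm_mul_le_of_le (norm_mul_le_of_le (hmul₃ hp hq) hb) hr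
  rw [second_difference_eq_of_resolvent hxy hyz]
  refine norm_add₃_le.trans ?_
  rw [norm_smul, norm_smul, norm_smul, norm_mul (t - u), norm_pow,
    show 2 * t - s - u = -(s - 2 * t + u) by ring, norm_neg]
  calc _ ≤ d * (c * β * c) + e * e * (c * β * c * β * c) + e ^ 2 * (c * β * c * β * c) := by
        gcongr
        exacts [hmul₃ hx hy, hmul₅ hx hy hy, hmul₅ hy hy hz]
    _ = _ := by ring

theorem ContinuousLinearMap.exists_inverse_smul_one_add_smul {E : Type*} [NormedAddCommGroup E]
    [NormedSpace ℂ E] {b : E →L[ℂ] E} {c₁ : ℝ} (hc₁ : 1 ≤ c₁)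
    (hb : ∀ μ : ℂ, 0 ≤ μ.re → ∃ J : E →L[ℂ] E,
      (μ • (1 : E →L[ℂ] E) + b) * J = 1 ∧ J * (μ • (1 : E →L[ℂ] E) + b) = 1 ∧
      (1 + ‖μ‖) * ‖J‖ ≤ c₁)
    {lam : ℂ} (hlam : 0 < lam.re) {r : ℝ} (hr : 0 ≤ r) :
    ∃ N : E →L[ℂ] E, (lam • 1 + (r : ℂ) • b) * N = 1 ∧ N * (lam • 1 + (r : ℂ) • b) = 1 ∧
      (r + ‖lam‖) * ‖N‖ ≤ c₁ := by
  rcases hr.eq_or_lt with rfl | hr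
  · have hlam0 : lam ≠ 0 := fun h => by simp [h] at hlam
    refine ⟨lam⁻¹ • 1, ?_, ?_, ?_⟩
    · simp [smul_smul, hlam0]
    · simp [smul_smul, hlam0]
    · calc (0 + ‖lam‖) * ‖lam⁻¹ • (1 : E →L[ℂ] E)‖ ≤ ‖lam‖ * (‖lam‖⁻¹ * 1) := by
            rw [zero_add, norm_smul, norm_inv]
            gcongr
            exact ContinuousLinearMap.norm_id_le
        _ ≤ c₁ := by rw [mul_one, mul_inv_cancel₀ (norm_ne_zero_iff.mpr hlam0)]; exact hc₁
  · obtain ⟨J, hJ₁, hJ₂, hJ⟩ := hb ((r⁻¹ : ℝ) • lam) (by simp; positivity)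
    have hscale : lam • (1 : E →L[ℂ] E) + (r : ℂ) • b = (r : ℂ) • (((r⁻¹ : ℝ) • lam) • 1 + b) := by
      rw [smul_add, smul_smul, Complex.real_smul, ← mul_assoc, ← Complex.ofReal_mul,
        mul_inv_cancel₀ hr.ne', Complex.ofReal_one, one_mul]
    have hr' : (r : ℂ) ≠ 0 := Complex.ofReal_ne_zero.mpr hr.ne'
    refine ⟨(r : ℂ)⁻¹ • J, ?_, ?_, ?_⟩
    · rw [hscale, smul_mul_smul_comm, hJ₁, mul_inv_cancel₀ hr', one_smul]
    · rw [hscale, smul_mul_smul_comm, hJ₂, inv_mul_cancel₀ hr', one_smul]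
    · calc (r + ‖lam‖) * ‖(r : ℂ)⁻¹ • J‖ = (1 + ‖(r⁻¹ : ℝ) • lam‖) * ‖J‖ := by
            rw [norm_smul, norm_smul, norm_inv, Complex.norm_real, Real.norm_eq_abs,
              Real.norm_eq_abs, abs_inv, abs_of_pos hr]
            field_simp
        _ ≤ c₁ := hJ

theorem mul_norm_pow_le_of_norm_sub_le_one {F : Type*} [SeminormedAddCommGroup F] {x y : F}
    {ρ ω c₁ μ : ℝ} (N : ℕ) (hω : 0 < ω) (hρ : ω ≤ ρ) (hxy : ‖x - y‖ ≤ 1) (hμ : 0 ≤ μ)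
    (h : (‖x‖ ^ N + ρ) * μ ≤ c₁) :
    μ * ‖y‖ ^ N ≤ 2 ^ (N - 1) * (1 + ω⁻¹) * c₁ := by
  have hy : ‖y‖ ≤ ‖x‖ + 1 := by
    linarith [norm_sub_norm_le y x, norm_sub_rev x y]
  have hpow : ‖y‖ ^ N ≤ 2 ^ (N - 1) * (‖x‖ ^ N + 1) := by
    simpa using (pow_le_pow_left₀ (norm_nonneg y) hy N).trans
      (add_pow_le (norm_nonneg x) zero_le_one N)
  have hρω : 1 ≤ ω⁻¹ * ρ := by rwa [le_inv_mul_iff₀ hω, mul_one]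
  have hshift : ‖x‖ ^ N + 1 ≤ (1 + ω⁻¹) * (‖x‖ ^ N + ρ) := by
    nlinarith [pow_nonneg (norm_nonneg x) N, inv_nonneg.mpr hω.le]
  calc μ * ‖y‖ ^ N ≤ μ * (2 ^ (N - 1) * ((1 + ω⁻¹) * (‖x‖ ^ N + ρ))) := by
        gcongr; exact hpow.trans (by gcongr)
    _ = 2 ^ (N - 1) * (1 + ω⁻¹) * ((‖x‖ ^ N + ρ) * μ) := by ring
    _ ≤ 2 ^ (N - 1) * (1 + ω⁻¹) * c₁ := by gcongr

theorem second_difference_symbol_bound_general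
    (E : Type*) [NormedAddCommGroup E] [NormedSpace ℂ E]
    (m : ℕ) (hm : 1 ≤ m) (ω c₁ c₂ : ℝ) (hω : 0 < ω) (hc₁ : 1 ≤ c₁) (hc : c₁ ≤ c₂)
    (b : E →L[ℂ] E) (hbn : ‖b‖ ≤ c₂)
    (hb : ∀ μ : ℂ, 0 ≤ μ.re → ∃ J : E →L[ℂ] E,
      (μ • (1 : E →L[ℂ] E) + b) * J = 1 ∧ J * (μ • (1 : E →L[ℂ] E) + b) = 1 ∧
      (1 + ‖μ‖) * ‖J‖ ≤ c₁) :
    ∃ C > (0 : ℝ), ∀ lam : ℂ, ω ≤ lam.re →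
      ∃ M : ℤ → E →L[ℂ] E,
        (∀ j : ℤ, (lam • (1 : E →L[ℂ] E) + ((j : ℂ) ^ (2 * m)) • b) * M j = 1 ∧
            M j * (lam • (1 : E →L[ℂ] E) + ((j : ℂ) ^ (2 * m)) • b) = 1) ∧
        ∀ k : ℤ, k ≠ 0 →
          |(k : ℝ)| ^ (2 * m + 2) * ‖M (k + 1) - 2 • M k + M (k - 1)‖ ≤ C := by
  obtain ⟨n, hn⟩ : ∃ n, 2 * m = n + 2 := ⟨2 * m - 2, by omega⟩
  have hN : Even (n + 2) := hn ▸ even_two_mul m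
  rw [hn]
  set c := 2 ^ (n + 1) * (1 + ω⁻¹) * c₁
  have hc₂ : 0 < c₂ := by linarith
  refine ⟨2 ^ (n + 3) * c₂ * c ^ 2 + 2 * (2 ^ (n + 2)) ^ 2 * c₂ ^ 2 * c ^ 3, by positivity,
    fun lam hlam => ?_⟩
  choose M hAM hMA hM using fun j : ℤ =>
    b.exists_inverse_smul_one_add_smul hc₁ hb (hω.trans_le hlam) (hN.pow_nonneg (j : ℝ))
  push_cast at hAM hMA
  refine ⟨M, fun j => ⟨hAM j, hMA j⟩, fun k hk => ?_⟩
  have hK : 1 ≤ ‖(k : ℂ)‖ := by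
    rw [Complex.norm_intCast, ← Int.cast_abs]; exact_mod_cast Int.one_le_abs hk
  rw [← Complex.norm_intCast]
  set K := ‖(k : ℂ)‖
  have hMk : ∀ j : ℤ, ‖(j : ℂ) - k‖ ≤ 1 → ‖M j‖ ≤ c * (K ^ (n + 2))⁻¹ := fun j hj => by
    rw [← div_eq_mul_inv, le_div_iff₀ (by positivity)]
    refine mul_norm_pow_le_of_norm_sub_le_one (n + 2) hω (hlam.trans (Complex.re_le_norm lam)) hj
      (norm_nonneg _) ?_
    rw [Complex.norm_intCast, hN.pow_abs]; exact hM j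
  have hbound := norm_second_difference_le_of_resolvent
    (sub_eq_smul_mul_mul_of_mul_eq_one (hMA (k + 1)) (hAM k))
    (sub_eq_smul_mul_mul_of_mul_eq_one (hMA k) (hAM (k - 1))) hbn
    (hMk (k + 1) (by simp)) (hMk k (by simp)) (hMk (k - 1) (by simp))
    (e := 2 ^ (n + 2) * K ^ (n + 1)) (d := 2 ^ (n + 3) * K ^ n)
    (by push_cast; exact norm_add_pow_sub_pow_le hK norm_one.le (n + 1))
    (by push_cast; rw [norm_sub_rev, sub_eq_add_neg (k : ℂ)]
        exact norm_add_pow_sub_pow_le hK (norm_neg (1 : ℂ) ▸ norm_one.le) (n + 1))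
    (by push_cast; exact norm_add_one_pow_sub_two_mul_pow_add_sub_one_pow_le hK n)
  calc K ^ (n + 2 + 2) * ‖M (k + 1) - 2 • M k + M (k - 1)‖ ≤ K ^ (n + 2 + 2) * _ :=
        mul_le_mul_of_nonneg_left hbound (by positivity)
    _ = _ := by field_simp; ring

/-- Uniform bound for the second difference of the operator-valued resolvent symbol
`M_j = (λ·id + j^{2m}·b)⁻¹`: there is `C = C(ω, m, c₁, c₂) > 0` such that for every
`λ` with `Re λ ≥ ω` and every nonzero `k ∈ ℤ`,
`|k|^{2m+2} · ‖M_{k+1} − 2M_k + M_{k−1}‖ ≤ C`. -/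
theorem second_difference_symbol_bound
    (E : Type*) [NormedAddCommGroup E] [NormedSpace ℂ E] [CompleteSpace E]
    (m : ℕ) (hm : 1 ≤ m) (ω c₁ c₂ : ℝ) (hω : 0 < ω) (hc₁ : 1 ≤ c₁) (hc : c₁ ≤ c₂)
    (b : E →L[ℂ] E) (hbn : ‖b‖ ≤ c₂)
    (hb : ∀ μ : ℂ, 0 ≤ μ.re → ∃ J : E →L[ℂ] E,
      (μ • (1 : E →L[ℂ] E) + b) * J = 1 ∧ J * (μ • (1 : E →L[ℂ] E) + b) = 1 ∧
      (1 + ‖μ‖) * ‖J‖ ≤ c₁) :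
    ∃ C > (0 : ℝ), ∀ lam : ℂ, ω ≤ lam.re →
      ∃ M : ℤ → E →L[ℂ] E,
        (∀ j : ℤ, (lam • (1 : E →L[ℂ] E) + ((j : ℂ) ^ (2 * m)) • b) * M j = 1 ∧
            M j * (lam • (1 : E →L[ℂ] E) + ((j : ℂ) ^ (2 * m)) • b) = 1) ∧
        ∀ k : ℤ, k ≠ 0 →
          |(k : ℝ)| ^ (2 * m + 2) * ‖M (k + 1) - 2 • M k + M (k - 1)‖ ≤ C :=
  second_difference_symbol_bound_general E m hm ω c₁ c₂ hω hc₁ hc b hbn hb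
end
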